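/- (Velocities confined to a rectangle.) Let R > 1, 0 < δ ≤ δ' ≤ 1 and let 𝓡 ⊂ ℝ² be a rectangle with side lengths δ and δ'. With the scattering setup (v_i = v* - ((v*-v̄_i)·ν*)ν*, all velocities in B_R, v_j fixed), ∫ 1_{v_i - v_j ∈ 𝓡} |(v* - v̄_i)·ν*| dv* dν* ≤ C R² δ (|log δ| + |log δ'| + 1). -/

import Mathlib

open MeasureTheory Metric
open scoped RealInnerProductSpace

noncomputable section

/-- The plane `ℝ²`. -/
abbrev E2 : Type := EuclideanSpace ℝ (Fin 2)

/-- The surface measure on the unit circle `𝕊¹ ⊂ ℝ²`. -/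
def sphμ : Measure (sphere (0 : E2) 1) := (volume : Measure E2).toSphere

/-- The post-collisional velocity `v_i = v* - ((v* - v̄_i)·ν*) ν*`. -/
def scat (vbar v : E2) (ν : E2) : E2 := v - ⟪v - vbar, ν⟫ • ν

/-- A rectangle in `ℝ²` with corner `c`, orthonormal directions `e₁, e₂` and side
lengths `δ, δ'`. -/
def rect (c e₁ e₂ : E2) (δ δ' : ℝ) : Set E2 :=
  {w | ∃ a b : ℝ, a ∈ Set.Icc 0 δ ∧ b ∈ Set.Icc 0 δ' ∧ w = c + a • e₁ + b • e₂}

/-!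
For fixed `ν`, the map `v ↦ v_i` is `v ↦ ⟪ω, v⟫ ω + const` with `ω ⊥ ν`, so the velocities with
`v_i - v_j ∈ 𝓡` form a slab `{⟪ω, v⟫ ∈ S}`, `S` being the section of `𝓡` by a line of direction
`ω`. That section has length at most `δ / |⟪e₂, ν⟫|` through the short side, and at most `2δ'`
through the long side when `|⟪e₂, ν⟫|` is small. As the weight is at most `2R` on `B_R`, the inner
integral is at most `4R² δ / max(|⟪e₂, ν⟫|, δ / 2δ')`. The arc `{|⟪e₂, ν⟫| ≤ r}` has measure
`O(r)`, so a dyadic decomposition in `|⟪e₂, ν⟫|` integrates this to `O(R² δ (log (δ'/δ) + 1))`.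
-/

open scoped ENNReal Pointwise

section OrthonormalPair

variable {e₁ e₂ : E2}

theorem exists_orthonormalBasis_of_pair (he₁ : ‖e₁‖ = 1) (he₂ : ‖e₂‖ = 1) (he₁₂ : ⟪e₁, e₂⟫ = 0) :
    ∃ b : OrthonormalBasis (Fin 2) ℝ E2, b 0 = e₁ ∧ b 1 = e₂ := by
  have horth : Orthonormal ℝ ![e₁, e₂] := by
    rw [orthonormal_iff_ite]
    intro i j
    fin_cases i <;> fin_cases j <;>
      simp [he₁, he₂, he₁₂, real_inner_comm e₁ e₂]
  have hcard : Fintype.card (Fin 2) = Module.finrank ℝ E2 := by simp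
  have hb := coe_basisOfOrthonormalOfCardEqFinrank horth hcard
  exact ⟨(basisOfOrthonormalOfCardEqFinrank horth hcard).toOrthonormalBasis (by rwa [hb]),
    by simp [hb], by simp [hb]⟩

theorem inner_smul_add_inner_smul_eq (he₁ : ‖e₁‖ = 1) (he₂ : ‖e₂‖ = 1) (he₁₂ : ⟪e₁, e₂⟫ = 0)
    (x : E2) : ⟪e₁, x⟫ • e₁ + ⟪e₂, x⟫ • e₂ = x := by
  obtain ⟨b, rfl, rfl⟩ := exists_orthonormalBasis_of_pair he₁ he₂ he₁₂
  simpa [Fin.sum_univ_two] using b.sum_repr' x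

theorem real_inner_eq_of_orthonormal_pair (he₁ : ‖e₁‖ = 1) (he₂ : ‖e₂‖ = 1)
    (he₁₂ : ⟪e₁, e₂⟫ = 0) (x y : E2) : ⟪x, y⟫ = ⟪e₁, x⟫ * ⟪e₁, y⟫ + ⟪e₂, x⟫ * ⟪e₂, y⟫ := by
  obtain ⟨b, rfl, rfl⟩ := exists_orthonormalBasis_of_pair he₁ he₂ he₁₂
  rw [← b.sum_inner_mul_inner x y, Fin.sum_univ_two, real_inner_comm x, real_inner_comm x]

theorem eq_of_inner_eq_of_orthonormal_pair (he₁ : ‖e₁‖ = 1) (he₂ : ‖e₂‖ = 1)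
    (he₁₂ : ⟪e₁, e₂⟫ = 0) {x y : E2} (h₁ : ⟪e₁, x⟫ = ⟪e₁, y⟫) (h₂ : ⟪e₂, x⟫ = ⟪e₂, y⟫) :
    x = y := by
  rw [← inner_smul_add_inner_smul_eq he₁ he₂ he₁₂ x, h₁, h₂,
    inner_smul_add_inner_smul_eq he₁ he₂ he₁₂ y]

def rotPerp (e₁ e₂ ν : E2) : E2 := ⟪e₂, ν⟫ • e₁ - ⟪e₁, ν⟫ • e₂

theorem inner_fst_rotPerp (he₁ : ‖e₁‖ = 1) (he₁₂ : ⟪e₁, e₂⟫ = 0) (ν : E2) :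
    ⟪e₁, rotPerp e₁ e₂ ν⟫ = ⟪e₂, ν⟫ := by
  simp [rotPerp, inner_sub_right, real_inner_smul_right, he₁, he₁₂]

theorem inner_snd_rotPerp (he₂ : ‖e₂‖ = 1) (he₁₂ : ⟪e₁, e₂⟫ = 0) (ν : E2) :
    ⟪e₂, rotPerp e₁ e₂ ν⟫ = -⟪e₁, ν⟫ := by
  simp [rotPerp, inner_sub_right, real_inner_smul_right, he₂, real_inner_comm e₁ e₂, he₁₂]

theorem sq_inner_add_sq_inner_eq_one (he₁ : ‖e₁‖ = 1) (he₂ : ‖e₂‖ = 1) (he₁₂ : ⟪e₁, e₂⟫ = 0)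
    {ν : E2} (hν : ‖ν‖ = 1) : ⟪e₁, ν⟫ ^ 2 + ⟪e₂, ν⟫ ^ 2 = 1 := by
  have := real_inner_eq_of_orthonormal_pair he₁ he₂ he₁₂ ν ν
  rw [real_inner_self_eq_norm_sq, hν] at this
  linear_combination -this

theorem norm_rotPerp (he₁ : ‖e₁‖ = 1) (he₂ : ‖e₂‖ = 1) (he₁₂ : ⟪e₁, e₂⟫ = 0) {ν : E2}
    (hν : ‖ν‖ = 1) : ‖rotPerp e₁ e₂ ν‖ = 1 := by
  have h := real_inner_eq_of_orthonormal_pair he₁ he₂ he₁₂ (rotPerp e₁ e₂ ν) (rotPerp e₁ e₂ ν)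
  rw [real_inner_self_eq_norm_sq, inner_fst_rotPerp he₁ he₁₂, inner_snd_rotPerp he₂ he₁₂] at h
  have := sq_inner_add_sq_inner_eq_one he₁ he₂ he₁₂ hν
  rw [← pow_eq_one_iff_of_nonneg (norm_nonneg _) two_ne_zero]
  linear_combination h + this

theorem real_inner_rotPerp_eq_zero (he₁ : ‖e₁‖ = 1) (he₂ : ‖e₂‖ = 1) (he₁₂ : ⟪e₁, e₂⟫ = 0)
    (ν : E2) : ⟪ν, rotPerp e₁ e₂ ν⟫ = 0 := by
  rw [real_inner_eq_of_orthonormal_pair he₁ he₂ he₁₂, inner_fst_rotPerp he₁ he₁₂,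
    inner_snd_rotPerp he₂ he₁₂]
  ring

/-- In the plane, removing the `ν`-component of `v` leaves its component along `rotPerp ν`. -/
theorem scat_eq (he₁ : ‖e₁‖ = 1) (he₂ : ‖e₂‖ = 1) (he₁₂ : ⟪e₁, e₂⟫ = 0) {ν : E2}
    (hν : ‖ν‖ = 1) (vbar v : E2) :
    scat vbar v ν = ⟪rotPerp e₁ e₂ ν, v⟫ • rotPerp e₁ e₂ ν + ⟪vbar, ν⟫ • ν := by
  have hn := sq_inner_add_sq_inner_eq_one he₁ he₂ he₁₂ hν
  have hinner := real_inner_eq_of_orthonormal_pair he₁ he₂ he₁₂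
  apply eq_of_inner_eq_of_orthonormal_pair he₁ he₂ he₁₂ <;>
    simp only [scat, inner_sub_right, inner_add_right, real_inner_smul_right, inner_sub_left,
      inner_fst_rotPerp he₁ he₁₂, inner_snd_rotPerp he₂ he₁₂, hinner (rotPerp e₁ e₂ ν) v,
      hinner v ν]
  · linear_combination -⟪e₁, v⟫ * hn
  · linear_combination -⟪e₂, v⟫ * hn

end OrthonormalPair

theorem volume_ball_inter_preimage_inner_le {w : E2} (hw : ‖w‖ = 1) (R : ℝ) (s : Set ℝ) :
    volume (ball (0 : E2) R ∩ (fun v => ⟪w, v⟫) ⁻¹' s) ≤ ENNReal.ofReal (2 * R) * volume s := by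
  let e₁ : E2 := EuclideanSpace.single 0 1
  let e₂ : E2 := EuclideanSpace.single 1 1
  have he₁ : ‖e₁‖ = 1 := by simp [e₁]
  have he₂ : ‖e₂‖ = 1 := by simp [e₂]
  have he₁₂ : ⟪e₁, e₂⟫ = 0 := by simp [e₁, e₂, EuclideanSpace.inner_single_left]
  obtain ⟨b, hb0, -⟩ := exists_orthonormalBasis_of_pair hw (norm_rotPerp he₁ he₂ he₁₂ hw)
    (real_inner_rotPerp_eq_zero he₁ he₂ he₁₂ w)
  let t : Fin 2 → Set ℝ := ![s, Set.Ioo (-R) R]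
  have hsub : ball (0 : E2) R ∩ (fun v => ⟪w, v⟫) ⁻¹' s ⊆
      b.repr ⁻¹' ((MeasurableEquiv.toLp 2 (Fin 2 → ℝ)).symm ⁻¹' Set.univ.pi t) := by
    rintro v ⟨hvR, hvs⟩
    rw [mem_ball_zero_iff] at hvR
    have h1 : |b.repr v 1| < R := (PiLp.norm_apply_le (b.repr v) 1).trans_lt (by simpa using hvR)
    simp only [Set.mem_preimage, Set.mem_univ_pi, Fin.forall_fin_two]
    exact ⟨by simpa [t, b.repr_apply_apply, hb0] using hvs, by simpa [t, abs_lt] using h1⟩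
  calc volume (ball (0 : E2) R ∩ (fun v => ⟪w, v⟫) ⁻¹' s)
      ≤ volume (Set.univ.pi t) :=
        (measure_mono hsub).trans <| (b.measurePreserving_repr.measure_preimage_le _).trans <|
          (EuclideanSpace.volume_preserving_symm_measurableEquiv_toLp _).measure_preimage_le _
    _ = ENNReal.ofReal (2 * R) * volume s := by
        rw [volume_pi_pi, Fin.prod_univ_two]
        simp only [t, Matrix.cons_val_zero, Matrix.cons_val_one, Real.volume_Ioo]
        rw [mul_comm, sub_neg_eq_add, ← two_mul]

theorem isCompact_rect (c e₁ e₂ : E2) (δ δ' : ℝ) : IsCompact (rect c e₁ e₂ δ δ') := by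
  have : rect c e₁ e₂ δ δ' =
      (fun q : ℝ × ℝ => c + q.1 • e₁ + q.2 • e₂) '' Set.Icc 0 δ ×ˢ Set.Icc 0 δ' := by
    ext w
    constructor
    · rintro ⟨a, b, ha, hb, rfl⟩
      exact ⟨(a, b), ⟨ha, hb⟩, rfl⟩
    · rintro ⟨⟨a, b⟩, ⟨ha, hb⟩, rfl⟩
      exact ⟨a, b, ha, hb, rfl⟩
  rw [this]
  exact (isCompact_Icc.prod isCompact_Icc).image (by fun_prop)

theorem rect_subset_inner_mem_Icc {c e₁ e₂ : E2} (he₁ : ‖e₁‖ = 1) (he₂ : ‖e₂‖ = 1) (he₁₂ : ⟪e₁, e₂⟫ = 0)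
    (δ δ' : ℝ) :
    rect c e₁ e₂ δ δ' ⊆ {w | ⟪e₁, w - c⟫ ∈ Set.Icc 0 δ ∧ ⟪e₂, w - c⟫ ∈ Set.Icc 0 δ'} := by
  rintro _ ⟨a, b, ha, hb, rfl⟩
  rw [Set.mem_ofPred_eq, add_assoc, add_sub_cancel_left]
  simpa [inner_add_right, real_inner_smul_right, he₁, he₂, he₁₂, real_inner_comm e₁ e₂]
    using And.intro ha hb

theorem volume_setOf_inner_smul_add_mem_Icc_le {V : Type*} [NormedAddCommGroup V]
    [InnerProductSpace ℝ V] {u ω : V} (h : ⟪u, ω⟫ ≠ 0) (p : V) (a : ℝ) :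
    volume {s : ℝ | ⟪u, s • ω + p⟫ ∈ Set.Icc 0 a} ≤ ENNReal.ofReal (a / |⟪u, ω⟫|) := by
  have hset : {s : ℝ | ⟪u, s • ω + p⟫ ∈ Set.Icc 0 a} =
      (fun s => ⟪u, ω⟫ * s) ⁻¹' Set.Icc (-⟪u, p⟫) (a - ⟪u, p⟫) := by
    ext s
    simp only [Set.mem_ofPred_eq, Set.mem_preimage, Set.mem_Icc, inner_add_right,
      real_inner_smul_right]
    constructor <;> rintro ⟨h₁, h₂⟩ <;> constructor <;> linarith
  rw [hset, Real.volume_preimage_mul_left h, Real.volume_Icc, ← ENNReal.ofReal_mul (abs_nonneg _),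
    abs_inv, sub_neg_eq_add, sub_add_cancel, inv_mul_eq_div]

theorem volume_lineSection_rect_le {c e₁ e₂ : E2} (he₁ : ‖e₁‖ = 1) (he₂ : ‖e₂‖ = 1)
    (he₁₂ : ⟪e₁, e₂⟫ = 0) {δ δ' : ℝ} (hδ : 0 < δ) (hδδ' : δ ≤ δ') {ν : E2} (hν : ‖ν‖ = 1)
    (p : E2) :
    volume {s : ℝ | s • rotPerp e₁ e₂ ν + p ∈ rect c e₁ e₂ δ δ'} ≤
      ENNReal.ofReal (δ / max |⟪e₂, ν⟫| (δ / (2 * δ'))) := by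
  have hδ' : 0 < δ' := hδ.trans_le hδδ'
  have hsub (s : ℝ) (hs : s • rotPerp e₁ e₂ ν + p ∈ rect c e₁ e₂ δ δ') :
      ⟪e₁, s • rotPerp e₁ e₂ ν + (p - c)⟫ ∈ Set.Icc 0 δ ∧
        ⟪e₂, s • rotPerp e₁ e₂ ν + (p - c)⟫ ∈ Set.Icc 0 δ' := by
    rw [← add_sub_assoc]
    exact rect_subset_inner_mem_Icc he₁ he₂ he₁₂ δ δ' hs
  by_cases hbig : δ / (2 * δ') ≤ |⟪e₂, ν⟫|
  · have hne : ⟪e₁, rotPerp e₁ e₂ ν⟫ ≠ 0 := by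
      rw [inner_fst_rotPerp he₁ he₁₂, ← abs_pos]
      exact (by positivity : 0 < δ / (2 * δ')).trans_le hbig
    calc _ ≤ volume {s : ℝ | ⟪e₁, s • rotPerp e₁ e₂ ν + (p - c)⟫ ∈ Set.Icc 0 δ} :=
          measure_mono fun s hs => (hsub s hs).1
      _ ≤ _ := volume_setOf_inner_smul_add_mem_Icc_le hne _ _
      _ = _ := by rw [inner_fst_rotPerp he₁ he₁₂, max_eq_left hbig]
  · -- now `|⟪e₁, ν⟫| ≥ 1/2`, and the long side `δ'` gives the bound
    rw [not_le] at hbig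
    have hsmall : |⟪e₂, ν⟫| ≤ 1 / 2 :=
      hbig.le.trans ((div_le_div_iff₀ (by positivity) two_pos).2 (by linarith))
    have hlarge : 1 / 2 ≤ |⟪e₁, ν⟫| := by
      have := sq_inner_add_sq_inner_eq_one he₁ he₂ he₁₂ hν
      rw [← sq_abs ⟪e₁, ν⟫, ← sq_abs ⟪e₂, ν⟫] at this
      nlinarith [abs_nonneg ⟪e₁, ν⟫, abs_nonneg ⟪e₂, ν⟫]
    have hne : ⟪e₂, rotPerp e₁ e₂ ν⟫ ≠ 0 := by
      rw [inner_snd_rotPerp he₂ he₁₂, neg_ne_zero, ← abs_pos]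
      linarith
    calc _ ≤ volume {s : ℝ | ⟪e₂, s • rotPerp e₁ e₂ ν + (p - c)⟫ ∈ Set.Icc 0 δ'} :=
          measure_mono fun s hs => (hsub s hs).2
      _ ≤ _ := volume_setOf_inner_smul_add_mem_Icc_le hne _ _
      _ ≤ _ := by
        rw [inner_snd_rotPerp he₂ he₁₂, abs_neg, max_eq_right hbig.le, div_div_eq_mul_div,
          mul_div_cancel_left₀ _ hδ.ne']
        gcongr
        calc δ' / |⟪e₁, ν⟫| ≤ δ' / (1 / 2) := by gcongr
          _ = 2 * δ' := by ring

theorem integral_indicator_scat_mem_rect_le {R δ δ' : ℝ} {c e₁ e₂ vbar vj : E2} (hR : 0 ≤ R)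
    (hδ : 0 < δ) (hδδ' : δ ≤ δ') (he₁ : ‖e₁‖ = 1) (he₂ : ‖e₂‖ = 1) (he₁₂ : ⟪e₁, e₂⟫ = 0)
    (hvbar : ‖vbar‖ ≤ R) {ν : E2} (hν : ‖ν‖ = 1) :
    ∫ v in ball (0 : E2) R,
        Set.indicator {v : E2 | scat vbar v ν - vj ∈ rect c e₁ e₂ δ δ'}
          (fun v => |⟪v - vbar, ν⟫|) v ∂volume
      ≤ 4 * R ^ 2 * (δ / max |⟪e₂, ν⟫| (δ / (2 * δ'))) := by
  set ω := rotPerp e₁ e₂ ν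
  set a := δ / max |⟪e₂, ν⟫| (δ / (2 * δ'))
  set A := {v : E2 | scat vbar v ν - vj ∈ rect c e₁ e₂ δ δ'}
  have hA : A = (fun v => ⟪ω, v⟫) ⁻¹' {s : ℝ | s • ω + (⟪vbar, ν⟫ • ν - vj) ∈ rect c e₁ e₂ δ δ'} := by
    ext v
    simp [A, ω, scat_eq he₁ he₂ he₁₂ hν, add_sub_assoc]
  have hAmeas : MeasurableSet A :=
    ((isCompact_rect c e₁ e₂ δ δ').isClosed.preimage (by unfold scat; fun_prop)).measurableSet
  have hvol : volume (ball (0 : E2) R ∩ A) ≤ ENNReal.ofReal (2 * R * a) := by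
    rw [hA, ENNReal.ofReal_mul (by positivity)]
    exact (volume_ball_inter_preimage_inner_le (norm_rotPerp he₁ he₂ he₁₂ hν) R _).trans
      (by gcongr; exact volume_lineSection_rect_le he₁ he₂ he₁₂ hδ hδδ' hν _)
  have hbound : ∀ v ∈ ball (0 : E2) R ∩ A, ‖|⟪v - vbar, ν⟫|‖ ≤ 2 * R := by
    rintro v ⟨hv, -⟩
    rw [norm_abs_eq_norm, Real.norm_eq_abs]
    calc |⟪v - vbar, ν⟫| ≤ ‖v - vbar‖ * ‖ν‖ := abs_real_inner_le_norm _ _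
      _ ≤ ‖v‖ + ‖vbar‖ := by rw [hν, mul_one]; exact norm_sub_le _ _
      _ ≤ 2 * R := by linarith [mem_ball_zero_iff.1 hv]
  calc _ = ∫ v in ball (0 : E2) R ∩ A, |⟪v - vbar, ν⟫| := setIntegral_indicator hAmeas
    _ ≤ 2 * R * volume.real (ball (0 : E2) R ∩ A) :=
        (le_abs_self _).trans (norm_setIntegral_le_of_norm_le_const
          (hvol.trans_lt ENNReal.ofReal_lt_top) hbound)
    _ ≤ 2 * R * (2 * R * a) := by
        gcongr
        exact ENNReal.toReal_le_of_le_ofReal (by positivity) hvol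
    _ = 4 * R ^ 2 * a := by ring

instance : IsFiniteMeasure sphμ := by unfold sphμ; infer_instance

theorem sphμ_setOf_abs_inner_le {w : E2} (hw : ‖w‖ = 1) (r : ℝ) :
    sphμ {ν : sphere (0 : E2) 1 | |⟪w, (ν : E2)⟫| ≤ r} ≤ ENNReal.ofReal (8 * r) := by
  set A := {ν : sphere (0 : E2) 1 | |⟪w, (ν : E2)⟫| ≤ r}
  have hAmeas : MeasurableSet A := measurableSet_le (by fun_prop) measurable_const
  have hcone : Set.Ioo (0 : ℝ) 1 • ((↑) '' A : Set E2) ⊆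
      ball (0 : E2) 1 ∩ (fun v => ⟪w, v⟫) ⁻¹' Set.Icc (-r) r := by
    rintro _ ⟨τ, ⟨hτ0, hτ1⟩, _, ⟨ν, hν, rfl⟩, rfl⟩
    refine ⟨?_, ?_⟩
    · simpa [norm_smul, abs_of_pos hτ0] using hτ1
    · rw [Set.mem_preimage, Set.mem_Icc, ← abs_le, real_inner_smul_right, abs_mul,
        abs_of_pos hτ0]
      exact (mul_le_of_le_one_left (abs_nonneg _) hτ1.le).trans hν
  rw [sphμ, Measure.toSphere_apply' _ hAmeas, finrank_euclideanSpace_fin]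
  calc ((2 : ℕ) : ℝ≥0∞) * volume (Set.Ioo (0 : ℝ) 1 • ((↑) '' A : Set E2))
      ≤ 2 * (ENNReal.ofReal (2 * 1) * volume (Set.Icc (-r) r)) := by
        push_cast
        gcongr
        exact (measure_mono hcone).trans (volume_ball_inter_preimage_inner_le hw 1 _)
    _ = ENNReal.ofReal (8 * r) := by
        rw [Real.volume_Icc, ← ENNReal.ofReal_ofNat 2, ← ENNReal.ofReal_mul (by norm_num),
          ← ENNReal.ofReal_mul (by norm_num)]
        ring_nf

theorem inv_max_abs_le_sum_indicator {y m : ℝ} (hy : |y| ≤ 1) {N : ℕ}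
    (hN : (1 / 2 : ℝ) ^ N ≤ m) :
    (max |y| m)⁻¹ ≤ ∑ k ∈ Finset.range (N + 1),
      2 ^ (k + 1) * (Set.Iic ((1 / 2 : ℝ) ^ k)).indicator 1 |y| := by
  -- the last dyadic level `k₀ ≤ N` below which `|y|` lies
  set k₀ := Nat.findGreatest (fun k => |y| ≤ (1 / 2 : ℝ) ^ k) N
  have hk₀ : |y| ≤ (1 / 2 : ℝ) ^ k₀ := Nat.findGreatest_spec (P := fun k => |y| ≤ (1 / 2 : ℝ) ^ k) (Nat.zero_le N)
    (by simpa using hy)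
  have hk₀N : k₀ ≤ N := Nat.findGreatest_le N
  have hlow : (1 / 2 : ℝ) ^ (k₀ + 1) ≤ max |y| m := by
    rcases hk₀N.eq_or_lt with heq | hlt
    · exact (pow_le_pow_of_le_one (by norm_num) (by norm_num) (by omega)).trans
        (hN.trans (le_max_right _ _))
    · have := Nat.findGreatest_is_greatest (Nat.lt_succ_self k₀) (by omega : k₀ + 1 ≤ N)
      exact (not_le.1 this).le.trans (le_max_left _ _)
  calc (max |y| m)⁻¹ ≤ ((1 / 2 : ℝ) ^ (k₀ + 1))⁻¹ := inv_anti₀ (by positivity) hlow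
    _ = 2 ^ (k₀ + 1) * (Set.Iic ((1 / 2 : ℝ) ^ k₀)).indicator 1 |y| := by
        rw [Set.indicator_of_mem (Set.mem_Iic.2 hk₀)]
        simp
    _ ≤ _ := Finset.single_le_sum (f := fun k =>
          (2 : ℝ) ^ (k + 1) * (Set.Iic ((1 / 2 : ℝ) ^ k)).indicator 1 |y|)
        (fun k _ => mul_nonneg (by positivity) (Set.indicator_nonneg (by simp) _))
        (Finset.mem_range.2 (by omega))

theorem integrable_inv_max_abs {X : Type*} [MeasurableSpace X] (μ : Measure X)
    [IsFiniteMeasure μ] {g : X → ℝ} (hg : Measurable g) {m : ℝ} (hm : 0 < m) :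
    Integrable (fun x => (max |g x| m)⁻¹) μ :=
  Integrable.of_bound (by fun_prop) m⁻¹ (ae_of_all _ fun x => by
    rw [Real.norm_of_nonneg (by positivity)]
    exact inv_anti₀ hm (le_max_right _ _))

theorem integral_inv_max_abs_le {X : Type*} [MeasurableSpace X] (μ : Measure X)
    [IsFiniteMeasure μ] {g : X → ℝ} (hg : Measurable g) (hg1 : ∀ x, |g x| ≤ 1) {K : ℝ}
    (hK0 : 0 ≤ K) (hK : ∀ r, μ {x | |g x| ≤ r} ≤ ENNReal.ofReal (K * r)) {m : ℝ} (hm : 0 < m)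
    {N : ℕ} (hN : (1 / 2 : ℝ) ^ N ≤ m) :
    ∫ x, (max |g x| m)⁻¹ ∂μ ≤ 2 * K * (N + 1) := by
  set A : ℕ → Set X := fun k => {x | |g x| ≤ (1 / 2 : ℝ) ^ k}
  have hA : ∀ k, MeasurableSet (A k) := fun k => measurableSet_le (by fun_prop) measurable_const
  have hint : ∀ k, Integrable (fun x => (2 : ℝ) ^ (k + 1) * (A k).indicator 1 x) μ := fun k =>
    ((integrable_const 1).indicator (hA k)).const_mul _
  calc ∫ x, (max |g x| m)⁻¹ ∂μ
      ≤ ∫ x, ∑ k ∈ Finset.range (N + 1), (2 : ℝ) ^ (k + 1) * (A k).indicator 1 x ∂μ :=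
        integral_mono_of_nonneg (ae_of_all _ fun x => by positivity)
          (integrable_finsetSum _ fun k _ => hint k)
          (ae_of_all _ fun x => (inv_max_abs_le_sum_indicator (hg1 x) hN).trans_eq
            (Finset.sum_congr rfl fun k _ => by simp [A, Set.indicator_apply]))
    _ = ∑ k ∈ Finset.range (N + 1), (2 : ℝ) ^ (k + 1) * μ.real (A k) := by
        rw [integral_finsetSum _ fun k _ => hint k]
        simp_rw [integral_const_mul, integral_indicator_one (hA _)]
    _ ≤ ∑ k ∈ Finset.range (N + 1), 2 * K := by
        refine Finset.sum_le_sum fun k _ => ?_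
        calc (2 : ℝ) ^ (k + 1) * μ.real (A k) ≤ 2 ^ (k + 1) * (K * (1 / 2) ^ k) := by
              gcongr
              exact ENNReal.toReal_le_of_le_ofReal (by positivity) (hK _)
          _ = 2 * K := by rw [pow_succ, one_div, inv_pow]; field_simp
    _ = 2 * K * (N + 1) := by simp [mul_comm]

theorem exists_half_pow_le_and_le_log {m : ℝ} (hm0 : 0 < m) (hm1 : m ≤ 1) :
    ∃ N : ℕ, (1 / 2 : ℝ) ^ N ≤ m ∧ (N : ℝ) ≤ 2 * Real.log m⁻¹ + 1 := by
  obtain ⟨n, hn, hn'⟩ := exists_nat_pow_near (one_le_inv₀ hm0 |>.2 hm1) one_lt_two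
  refine ⟨n + 1, ?_, ?_⟩
  · rw [one_div, inv_pow]
    exact inv_le_of_inv_le₀ hm0 hn'.le
  · have hlog : n * Real.log 2 ≤ Real.log m⁻¹ := by
      rw [← Real.log_pow]
      exact Real.log_le_log (by positivity) hn
    have := Real.log_two_gt_d9
    push_cast
    nlinarith [Real.log_nonneg (one_le_inv₀ hm0 |>.2 hm1)]

/-- Velocities confined to a rectangle: if `𝓡` is a rectangle with side
lengths `δ ≤ δ' ≤ 1`, then
`∫ 1_{v_i - v_j ∈ 𝓡} |(v* - v̄_i)·ν*| dv* dν* ≤ C R² δ (|log δ| + |log δ'| + 1)`. -/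
theorem statement12 :
    ∃ C : ℝ, 0 < C ∧
      ∀ (R δ δ' : ℝ) (c e₁ e₂ vbar vj : E2),
        1 < R → 0 < δ → δ ≤ δ' → δ' ≤ 1 →
        ‖e₁‖ = 1 → ‖e₂‖ = 1 → ⟪e₁, e₂⟫ = 0 → ‖vbar‖ ≤ R → ‖vj‖ ≤ R →
        (∫ ν : sphere (0 : E2) 1, ∫ v in Metric.ball (0 : E2) R,
            Set.indicator {v : E2 | scat vbar v (ν : E2) - vj ∈ rect c e₁ e₂ δ δ'}
              (fun v => |⟪v - vbar, (ν : E2)⟫|) v ∂volume ∂sphμ)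
          ≤ C * R ^ 2 * δ * (|Real.log δ| + |Real.log δ'| + 1) := by
  refine ⟨256, by norm_num, fun R δ δ' c e₁ e₂ vbar vj hR hδ hδδ' _ he₁ he₂ he₁₂ hvbar _ => ?_⟩
  set m := δ / (2 * δ')
  have hδ' : 0 < δ' := hδ.trans_le hδδ'
  have hm0 : 0 < m := by positivity
  obtain ⟨N, hNm, hNlog⟩ :=
    exists_half_pow_le_and_le_log hm0 ((div_le_one (by positivity)).2 (by linarith))
  have hlog : Real.log m⁻¹ ≤ |Real.log δ| + |Real.log δ'| + 1 := by
    rw [inv_div, Real.log_div (by positivity) hδ.ne', Real.log_mul two_ne_zero hδ'.ne']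
    linarith [Real.log_two_lt_d9, le_abs_self (Real.log δ'), neg_abs_le (Real.log δ)]
  have hg : Measurable fun ν : sphere (0 : E2) 1 => ⟪e₂, (ν : E2)⟫ := by fun_prop
  have hg1 (ν : sphere (0 : E2) 1) : |⟪e₂, (ν : E2)⟫| ≤ 1 := by
    simpa [he₂] using abs_real_inner_le_norm e₂ ν
  calc _ ≤ ∫ ν : sphere (0 : E2) 1, 4 * R ^ 2 * δ * (max |⟪e₂, (ν : E2)⟫| m)⁻¹ ∂sphμ :=
        integral_mono_of_nonneg
          (ae_of_all _ fun ν => integral_nonneg fun v => Set.indicator_nonneg (by simp) v)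
          ((integrable_inv_max_abs sphμ hg hm0).const_mul _)
          (ae_of_all _ fun ν => (integral_indicator_scat_mem_rect_le (by linarith) hδ hδδ'
            he₁ he₂ he₁₂ hvbar (norm_eq_of_mem_sphere ν)).trans_eq (by ring))
    _ ≤ 4 * R ^ 2 * δ * (2 * 8 * (N + 1)) := by
        rw [integral_const_mul]
        gcongr
        exact integral_inv_max_abs_le sphμ hg hg1 (by norm_num) (sphμ_setOf_abs_inner_le he₂) hm0 hNm
    _ ≤ 256 * R ^ 2 * δ * (|Real.log δ| + |Real.log δ'| + 1) := by
        have : (N : ℝ) + 1 ≤ 4 * (|Real.log δ| + |Real.log δ'| + 1) := by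
          linarith [abs_nonneg (Real.log δ), abs_nonneg (Real.log δ')]
        calc 4 * R ^ 2 * δ * (2 * 8 * (N + 1)) = 64 * R ^ 2 * δ * (N + 1) := by ring
          _ ≤ 64 * R ^ 2 * δ * (4 * (|Real.log δ| + |Real.log δ'| + 1)) := by gcongr
          _ = _ := by ring
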